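/- arXiv:2111.02297 — 2 statements merged into one kernel-verified Lean document; each statement's English description precedes it below -/
import Mathlib

section
/- Let n ≥ 1 be an integer, let x, y ∈ ℂ^n each have pairwise distinct entries and satisfy (∏_{i=1}^n x_i)·(∏_{j=1}^n y_j) = 1, and let t ∈ ℂ satisfy (max_i |x_i|)·(max_j |y_j|)·|t| < 1 (this forces |t| < 1). Then the family (λ_x(m₁,…,m_{n−1},0) λ_y(m₁,…,m_{n−1},0) t^{m₁+⋯+m_{n−1}}), indexed by tuples m ∈ ℤ^{n−1} with m₁ ≥ … ≥ m_{n−1} ≥ 0, is absolutely summable, with sum (1 − t^n) · ∏_{i=1}^{n} ∏_{j=1}^{n} (1 − x_i y_j t)^{-1}. -/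
/-!
Expanding `alternant x l = det (x_j ^ l_i)` by the Leibniz formula and summing geometric series
over `l ∈ ℕⁿ` gives `∑_l alternant x l * ∏ y_i ^ l_i = det ((1 - x_i y_j)⁻¹)`, which the Cauchy
determinant evaluates as `V(x) V(y) ∏ (1 - x_i y_j)⁻¹`, `V` the Vandermonde determinant. Only
tuples `l` with distinct entries contribute, and grouping them by their decreasing rearrangement
`μ + ρ`, `ρ = (n-1, …, 1, 0)`, turns the left side into `V(x) V(y) ∑_μ s_μ(x) s_μ(y)`: this is
Cauchy's identity `∑_μ s_μ(x) s_μ(y) = ∏ (1 - x_i y_j)⁻¹`.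

Apply it to `x` and `t • y`. A partition with at most `n` parts is `μ = (m, 0) + c` with `c = μ_n`,
and `s_μ(x) s_μ(t • y) = ((∏ x) (∏ y) tⁿ)^c s_m(x) s_m(y) t^|m|`. Since `(∏ x)(∏ y) = 1`, the sum
over `c` is the geometric series `(1 - tⁿ)⁻¹`.
-/

/-- The Schur polynomial `λ_x(m) = det([x_j^{m_i + N − i}]) / det([x_j^{N − i}])`. -/
noncomputable def schur {N : ℕ} (x : Fin N → ℂ) (m : Fin N → ℕ) : ℂ :=
  (Matrix.of fun i j : Fin N => x j ^ (m i + (N - 1 - (i : ℕ)))).det /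
  (Matrix.of fun i j : Fin N => x j ^ (N - 1 - (i : ℕ))).det

open Finset Equiv Matrix

section Alternant

variable {R : Type*} [CommRing R] {n : ℕ}

noncomputable def alternant (x : Fin n → R) (l : Fin n → ℕ) : R :=
  (of fun i j => x j ^ l i).det

lemma alternant_eq_sum (x : Fin n → R) (l : Fin n → ℕ) :
    alternant x l = ∑ σ : Perm (Fin n), ((Perm.sign σ : ℤ) : R) * ∏ i, x i ^ l (σ i) :=
  det_apply' _

lemma alternant_eq_sum' (x : Fin n → R) (l : Fin n → ℕ) :
    alternant x l = ∑ σ : Perm (Fin n), ((Perm.sign σ : ℤ) : R) * ∏ i, x (σ i) ^ l i := by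
  rw [alternant, ← det_transpose, det_apply']
  rfl

lemma alternant_comp_perm (x : Fin n → R) (l : Fin n → ℕ) (σ : Perm (Fin n)) :
    alternant x (l ∘ σ) = ((Perm.sign σ : ℤ) : R) * alternant x l := by
  rw [alternant, alternant, ← det_permute]
  rfl

lemma alternant_eq_zero_of_not_injective (x : Fin n → R) {l : Fin n → ℕ}
    (hl : ¬ Function.Injective l) : alternant x l = 0 := by
  obtain ⟨i, j, hij, hne⟩ : ∃ i j, l i = l j ∧ i ≠ j := by
    simpa [Function.Injective] using hl
  exact det_zero_of_row_eq hne (funext fun k => by simp [hij])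

lemma alternant_add_const (x : Fin n → R) (l : Fin n → ℕ) (c : ℕ) :
    alternant x (fun i => l i + c) = (∏ j, x j) ^ c * alternant x l := by
  rw [alternant, alternant, ← prod_pow, ← det_mul_row]
  congr 1
  ext i j
  simp [pow_add, mul_comm]

lemma alternant_smul (t : R) (x : Fin n → R) (l : Fin n → ℕ) :
    alternant (t • x) l = t ^ (∑ i, l i) * alternant x l := by
  rw [alternant, alternant, ← prod_pow_eq_pow_sum, ← det_mul_column]
  congr 1
  ext i j
  simp [mul_pow]

lemma alternant_rev (x : Fin n → R) :
    alternant x (fun i => n - 1 - i) = ((Perm.sign (Fin.revPerm : Perm (Fin n)) : ℤ) : R) *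
      (vandermonde x).det := by
  rw [alternant, ← det_transpose (vandermonde x), ← det_permute]
  congr 1
  ext i j
  simp only [of_apply, submatrix_apply, transpose_apply, vandermonde_apply, Fin.revPerm_apply,
    Fin.val_rev, id]
  congr 1
  omega

lemma sign_cast_mul_self (σ : Perm (Fin n)) :
    ((Perm.sign σ : ℤ) : R) * ((Perm.sign σ : ℤ) : R) = 1 := by
  rw [← Int.cast_mul, ← Units.val_mul, Int.units_mul_self, Units.val_one, Int.cast_one]

lemma alternant_rev_mul_alternant_rev (x y : Fin n → R) :
    alternant x (fun i => n - 1 - i) * alternant y (fun i => n - 1 - i) =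
      (vandermonde x).det * (vandermonde y).det := by
  rw [alternant_rev, alternant_rev, mul_mul_mul_comm, sign_cast_mul_self, one_mul]

lemma alternant_rev_ne_zero {K : Type*} [Field K] {x : Fin n → K} (hx : Function.Injective x) :
    alternant x (fun i => n - 1 - i) ≠ 0 := by
  rw [alternant_rev]
  exact mul_ne_zero (left_ne_zero_of_mul_eq_one (sign_cast_mul_self _))
    (det_vandermonde_ne_zero_iff.mpr hx)

lemma sum_perm_alternant_mul_prod_pow (x y : Fin n → R) (s : Fin n → ℕ) :
    ∑ π : Perm (Fin n), alternant x (s ∘ π) * ∏ i, y i ^ s (π i) =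
      alternant x s * alternant y s := by
  simp only [alternant_comp_perm, alternant_eq_sum y s, mul_sum, mul_assoc, mul_left_comm]

end Alternant

lemma schur_eq_div {N : ℕ} (x : Fin N → ℂ) (m : Fin N → ℕ) :
    schur x m = alternant x (fun i => m i + (N - 1 - i)) / alternant x (fun i => N - 1 - i) :=
  rfl

lemma schur_zero {N : ℕ} {x : Fin N → ℂ} (hx : Function.Injective x) : schur x 0 = 1 := by
  simpa [schur_eq_div] using div_self (alternant_rev_ne_zero hx)

lemma schur_add_const {N : ℕ} (x : Fin N → ℂ) (m : Fin N → ℕ) (c : ℕ) :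
    schur x (fun i => m i + c) = (∏ j, x j) ^ c * schur x m := by
  simp only [schur_eq_div, add_right_comm _ c, alternant_add_const, mul_div_assoc]

lemma schur_smul {N : ℕ} {t : ℂ} (ht : t ≠ 0) (x : Fin N → ℂ) (m : Fin N → ℕ) :
    schur (t • x) m = t ^ (∑ i, m i) * schur x m := by
  rw [schur_eq_div, schur_eq_div, alternant_smul, alternant_smul, sum_add_distrib,
    pow_add, mul_comm (t ^ _), mul_assoc, mul_div_mul_left _ _ (pow_ne_zero _ ht), mul_div_assoc]

section CauchyDeterminant

open Polynomial

lemma prod_prod_erase_eq_prod_prod_Ioi {M : Type*} [CommMonoid M] {n : ℕ}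
    (g : Fin n → Fin n → M) :
    ∏ i, ∏ j ∈ univ.erase i, g i j = ∏ i, ∏ j ∈ Ioi i, g i j * g j i := by
  have hsplit : ∀ i : Fin n, univ.erase i = Ioi i ∪ Iio i := fun i => by
    ext j
    simp only [mem_erase, mem_univ, and_true, mem_union, mem_Ioi, mem_Iio]
    omega
  have hdisj : ∀ i : Fin n, Disjoint (Ioi i) (Iio i) := fun i =>
    disjoint_left.2 fun j hi hj => (mem_Ioi.1 hi).not_gt (mem_Iio.1 hj)
  simp only [hsplit, prod_union (hdisj _), prod_mul_distrib]
  congr 1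
  exact prod_comm' (by simp)

lemma of_eval_eq_vandermonde_mul_of_coeff {R : Type*} [CommRing R] {n : ℕ} (v : Fin n → R)
    (p : Fin n → R[X]) (hp : ∀ j, (p j).natDegree < n) :
    of (fun i j => (p j).eval (v i)) = vandermonde v * of (fun (i j : Fin n) => (p j).coeff i) := by
  ext i j
  rw [of_apply, mul_apply, eval_eq_sum_range' (hp j), ← Fin.sum_univ_eq_sum_range]
  simp [mul_comm]

variable {K : Type*} [Field K] {n : ℕ}

lemma natDegree_prod_erase_one_sub_C_mul_X_lt (b : Fin n → K) (j : Fin n) :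
    (∏ l ∈ univ.erase j, (1 - C (b l) * X)).natDegree < n := by
  have hdeg : ∀ l, (1 - C (b l) * X).natDegree ≤ 1 := fun l => by compute_degree
  calc _ ≤ ∑ l ∈ univ.erase j, (1 - C (b l) * X).natDegree := natDegree_prod_le _ _
    _ ≤ (univ.erase j).card * 1 := sum_le_card_nsmul _ _ _ fun l _ => hdeg l
    _ < n := by simp [card_erase_of_mem, j.pos]

lemma det_of_prod_erase_one_sub_mul (a b : Fin n → K) (hb : Function.Injective b)
    (hb0 : ∀ j, b j ≠ 0) :
    (of fun i j => ∏ l ∈ univ.erase j, (1 - a i * b l)).det =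
      (vandermonde a).det * (vandermonde b).det := by
  set q : Fin n → K[X] := fun j => ∏ l ∈ univ.erase j, (1 - C (b l) * X)
  have hq : ∀ u : Fin n → K, (of fun i j => ∏ l ∈ univ.erase j, (1 - u i * b l)).det =
      (vandermonde u).det * (of fun (i j : Fin n) => (q j).coeff i).det := fun u => by
    rw [← det_mul, ← of_eval_eq_vandermonde_mul_of_coeff u q
      (natDegree_prod_erase_one_sub_C_mul_X_lt b)]
    congr 1
    ext i j
    simp only [q, of_apply, eval_prod, eval_sub, eval_one, eval_mul, eval_C, eval_X, mul_comm]
  -- `hq` at the nodes `u i = (b i)⁻¹`, where the matrix is diagonal, determines `det (coeff)`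
  have hdiag : (of fun i j => ∏ l ∈ univ.erase j, (1 - (b i)⁻¹ * b l)) =
      diagonal fun i => ∏ l ∈ univ.erase i, (1 - (b i)⁻¹ * b l) := by
    ext i j
    rcases eq_or_ne i j with rfl | hij
    · simp
    · rw [diagonal_apply_ne _ hij, of_apply]
      exact prod_eq_zero (mem_erase.2 ⟨hij, mem_univ i⟩) (by simp [hb0 i])
  have hpair : ∀ i j, (1 - (b i)⁻¹ * b j) * (1 - (b j)⁻¹ * b i) =
      ((b j)⁻¹ - (b i)⁻¹) * (b j - b i) := fun i j => by
    field_simp [hb0 i, hb0 j]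
  have hinv : (vandermonde fun i => (b i)⁻¹).det ≠ 0 :=
    det_vandermonde_ne_zero_iff.2 (inv_injective.comp hb)
  have hcoeff : (of fun (i j : Fin n) => (q j).coeff i).det = (vandermonde b).det := by
    refine mul_left_cancel₀ hinv ?_
    rw [← hq, hdiag, det_diagonal, prod_prod_erase_eq_prod_prod_Ioi, det_vandermonde,
      det_vandermonde, ← prod_mul_distrib]
    simp only [hpair, prod_mul_distrib]
  rw [hq, hcoeff]

theorem det_of_inv_one_sub_mul (a b : Fin n → K) (hb : Function.Injective b)
    (hb0 : ∀ j, b j ≠ 0) (hab : ∀ i j, 1 - a i * b j ≠ 0) :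
    (of fun i j => (1 - a i * b j)⁻¹).det =
      (vandermonde a).det * (vandermonde b).det * ∏ i, ∏ j, (1 - a i * b j)⁻¹ := by
  have hrow : (of fun i j => (1 - a i * b j)⁻¹) = of fun i j =>
      (∏ l, (1 - a i * b l))⁻¹ * (of fun i j => ∏ l ∈ univ.erase j, (1 - a i * b l)) i j := by
    ext i j
    rw [of_apply, of_apply, of_apply, ← mul_prod_erase univ _ (mem_univ j), mul_inv,
      inv_mul_cancel_right₀ (prod_ne_zero_iff.2 fun l _ => hab i l)]
  rw [hrow, det_mul_column, det_of_prod_erase_one_sub_mul a b hb hb0]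
  simp only [prod_inv_distrib]
  ring

end CauchyDeterminant

noncomputable def strictAntiPermEquiv (α : Type*) [LinearOrder α] (n : ℕ) :
    {s : Fin n → α // StrictAnti s} × Perm (Fin n) ≃ {l : Fin n → α // Function.Injective l} :=
  Equiv.ofBijective (fun p => ⟨p.1.1 ∘ p.2, p.1.2.injective.comp p.2.injective⟩) <| by
    constructor
    · rintro ⟨⟨s, hs⟩, σ⟩ ⟨⟨s', hs'⟩, σ'⟩ h
      have hcomp : s ∘ σ = s' ∘ σ' := congrArg Subtype.val h
      have hs's : s' = s ∘ (σ * σ'⁻¹ : Perm (Fin n)) := by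
        ext i
        simpa using (congrFun hcomp (σ'⁻¹ i)).symm
      have hss' : s = s' := by
        have := Tuple.unique_antitone (f := s) (σ := 1) (τ := σ * σ'⁻¹) hs.antitone
          (hs's ▸ hs'.antitone)
        rwa [Perm.coe_one, Function.comp_id, ← hs's] at this
      subst hss'
      have hσσ' : σ = σ' := DFunLike.coe_injective (hs.injective.comp_left hcomp)
      rw [hσσ']
    · rintro ⟨l, hl⟩
      set τ : Perm (Fin n) := Fin.revPerm.trans (Tuple.sort l)
      have hmono : StrictMono (l ∘ Tuple.sort l) :=
        (Tuple.monotone_sort l).strictMono_of_injective (hl.comp (Tuple.sort l).injective)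
      refine ⟨⟨⟨l ∘ τ, fun i j hij => hmono (Fin.rev_lt_rev.2 hij)⟩, τ⁻¹⟩, ?_⟩
      ext i
      simp

lemma Fin.antitone_add_val_of_strictAnti {n : ℕ} {s : Fin n → ℕ} (hs : StrictAnti s) :
    Antitone fun i => s i + i := by
  cases n with
  | zero => exact fun i => i.elim0
  | succ n =>
    refine Fin.antitone_iff_succ_le.2 fun i => ?_
    have := Fin.strictAnti_iff_succ_lt.1 hs i
    simp only [Fin.val_succ, Fin.val_castSucc]
    omega

def antitoneEquivStrictAnti (n : ℕ) :
    {μ : Fin n → ℕ // Antitone μ} ≃ {s : Fin n → ℕ // StrictAnti s} where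
  toFun μ := ⟨fun i => μ.1 i + (n - 1 - i), fun i j hij => by
    have := μ.2 hij.le
    have := j.isLt
    simp only [Fin.lt_def] at hij ⊢
    omega⟩
  invFun s := ⟨fun i => s.1 i - (n - 1 - i), fun i j hij => by
    have := Fin.antitone_add_val_of_strictAnti s.2 hij
    simp only [Fin.le_def] at hij this ⊢
    omega⟩
  left_inv μ := by ext i; simp
  right_inv s := by
    ext i
    have hi := i.isLt
    have := Fin.antitone_add_val_of_strictAnti s.2 (show i ≤ ⟨n - 1, by omega⟩ from
      Fin.le_def.2 (by simp only; omega))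
    simp only at this ⊢
    omega

lemma summable_norm_sum_perm_and_tsum_eq {E : Type*} [NormedAddCommGroup E] [CompleteSpace E]
    {α : Type*} [LinearOrder α] {n : ℕ} {f : (Fin n → α) → E} (hf : Summable fun l => ‖f l‖)
    (hf0 : ∀ l, ¬ Function.Injective l → f l = 0) :
    Summable (fun s : {s : Fin n → α // StrictAnti s} => ‖∑ π : Perm (Fin n), f (s.1 ∘ π)‖) ∧
      ∑' l, f l = ∑' s : {s : Fin n → α // StrictAnti s}, ∑ π : Perm (Fin n), f (s.1 ∘ π) := by
  have hg : Summable fun p : {s : Fin n → α // StrictAnti s} × Perm (Fin n) =>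
      ‖f (p.1.1 ∘ p.2)‖ :=
    (strictAntiPermEquiv α n).summable_iff.2 (hf.subtype _)
  refine ⟨?_, ?_⟩
  · refine hg.prod.of_nonneg_of_le (fun _ => norm_nonneg _) fun s => ?_
    rw [tsum_fintype]
    exact norm_sum_le _ _
  · calc ∑' l, f l = ∑' l : {l : Fin n → α // Function.Injective l}, f l :=
          (tsum_subtype_eq_of_support_subset fun l hl => not_not.1 (mt (hf0 l) hl)).symm
      _ = ∑' p : {s : Fin n → α // StrictAnti s} × Perm (Fin n), f (p.1.1 ∘ p.2) :=
          ((strictAntiPermEquiv α n).tsum_eq fun l => f l).symm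
      _ = _ := by
          rw [hg.of_norm.tsum_prod]
          simp only [tsum_fintype]

lemma summable_norm_prod_and_tsum_prod {R : Type*} [NormedCommRing R] [CompleteSpace R]
    {β : Type*} {n : ℕ} (f : Fin n → β → R) (hf : ∀ i, Summable fun b => ‖f i b‖) :
    Summable (fun l : Fin n → β => ‖∏ i, f i (l i)‖) ∧
      ∑' l : Fin n → β, ∏ i, f i (l i) = ∏ i, ∑' b, f i b := by
  induction n with
  | zero => exact ⟨Summable.of_finite, by simp⟩
  | succ n ih =>
    obtain ⟨hs, ht⟩ := ih (fun i => f i.succ) fun i => hf i.succ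
    have hcons : ∀ p : β × (Fin n → β), ∏ i, f i (Fin.consEquiv (fun _ => β) p i) =
        f 0 p.1 * ∏ i : Fin n, f i.succ (p.2 i) := fun p => by
      simp [Fin.prod_univ_succ, Fin.consEquiv]
    refine ⟨(Fin.consEquiv fun _ => β).summable_iff.1 ?_, ?_⟩
    · simpa only [Function.comp_def, hcons] using (hf 0).mul_norm hs
    · rw [← (Fin.consEquiv fun _ => β).tsum_eq, tsum_congr hcons,
        ← tsum_mul_tsum_of_summable_norm (hf 0) hs, ht, Fin.prod_univ_succ]

lemma summable_norm_prod_pow_and_tsum_prod_pow {𝕜 : Type*} [NormedField 𝕜] [CompleteSpace 𝕜]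
    {n : ℕ} (z : Fin n → 𝕜) (hz : ∀ i, ‖z i‖ < 1) :
    Summable (fun l : Fin n → ℕ => ‖∏ i, z i ^ l i‖) ∧
      ∑' l : Fin n → ℕ, ∏ i, z i ^ l i = ∏ i, (1 - z i)⁻¹ := by
  obtain ⟨hs, ht⟩ := summable_norm_prod_and_tsum_prod (fun i m => z i ^ m)
    fun i => summable_norm_geometric_of_norm_lt_one (hz i)
  exact ⟨hs, ht.trans (prod_congr rfl fun i _ => tsum_geometric_of_norm_lt_one (hz i))⟩

lemma norm_apply_mul_apply_le {𝕜 : Type*} [NormedRing 𝕜] {ι : Type*} [Fintype ι]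
    (x y : ι → 𝕜) (i j : ι) : ‖x i * y j‖ ≤ ‖x‖ * ‖y‖ :=
  (norm_mul_le _ _).trans <|
    mul_le_mul (norm_le_pi_norm x i) (norm_le_pi_norm y j) (norm_nonneg _) (norm_nonneg _)

lemma norm_prod_le_pi_norm_pow {R : Type*} [NormedCommRing R] [NormOneClass R] {n : ℕ}
    (x : Fin n → R) : ‖∏ i, x i‖ ≤ ‖x‖ ^ n :=
  calc ‖∏ i, x i‖ ≤ ∏ i, ‖x i‖ := norm_prod_le _ _
    _ ≤ ∏ _i : Fin n, ‖x‖ := prod_le_prod (fun _ _ => norm_nonneg _) fun i _ => norm_le_pi_norm x i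
    _ = ‖x‖ ^ n := by simp

lemma norm_prod_mul_prod_lt_one {R : Type*} [NormedCommRing R] [NormOneClass R] {n : ℕ}
    (hn : n ≠ 0) {x y : Fin n → R} (hxy : ‖x‖ * ‖y‖ < 1) : ‖(∏ i, x i) * ∏ j, y j‖ < 1 :=
  calc _ ≤ ‖x‖ ^ n * ‖y‖ ^ n := (norm_mul_le _ _).trans <|
        mul_le_mul (norm_prod_le_pi_norm_pow x) (norm_prod_le_pi_norm_pow y) (norm_nonneg _)
          (by positivity)
    _ = (‖x‖ * ‖y‖) ^ n := (mul_pow _ _ _).symm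
    _ < 1 := pow_lt_one₀ (by positivity) hxy hn

lemma norm_mul_norm_le_sup'_mul_sup' {E : Type*} [SeminormedAddCommGroup E] {ι : Type*}
    [Fintype ι] (h : (univ : Finset ι).Nonempty) (x y : ι → E) :
    ‖x‖ * ‖y‖ ≤ (univ.sup' h fun i => ‖x i‖) * univ.sup' h fun j => ‖y j‖ := by
  obtain ⟨i, -⟩ := h
  have hle : ∀ z : ι → E, ‖z‖ ≤ univ.sup' ⟨i, mem_univ i⟩ fun j => ‖z j‖ := fun z =>
    (pi_norm_le_iff_of_nonneg ((norm_nonneg (z i)).trans (le_sup' (fun j => ‖z j‖) (mem_univ i)))).2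
      fun j => le_sup' (fun j => ‖z j‖) (mem_univ j)
  exact mul_le_mul (hle x) (hle y) (norm_nonneg _) ((norm_nonneg x).trans (hle x))

lemma summable_norm_alternant_mul_prod_pow_and_tsum {n : ℕ} (x y : Fin n → ℂ)
    (hxy : ‖x‖ * ‖y‖ < 1) :
    Summable (fun l : Fin n → ℕ => ‖alternant x l * ∏ i, y i ^ l i‖) ∧
      ∑' l : Fin n → ℕ, alternant x l * ∏ i, y i ^ l i =
        (of fun i j => (1 - x i * y j)⁻¹).det := by
  have hexpand : ∀ l : Fin n → ℕ, alternant x l * ∏ i, y i ^ l i =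
      ∑ σ : Perm (Fin n), ((Perm.sign σ : ℤ) : ℂ) * ∏ i, (x (σ i) * y i) ^ l i := fun l => by
    simp only [alternant_eq_sum', sum_mul, mul_pow, prod_mul_distrib, mul_assoc]
  have hgeom : ∀ σ : Perm (Fin n), _ := fun σ =>
    summable_norm_prod_pow_and_tsum_prod_pow (fun i => x (σ i) * y i)
      fun i => (norm_apply_mul_apply_le x y _ _).trans_lt hxy
  simp only [hexpand]
  refine ⟨?_, ?_⟩
  · refine (summable_sum fun σ _ => (hgeom σ).1).of_nonneg_of_le (fun _ => norm_nonneg _)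
      fun l => (norm_sum_le _ _).trans (sum_le_sum fun σ _ => ?_)
    simp [← Int.cast_abs]
  · rw [Summable.tsum_finsetSum fun σ _ => (hgeom σ).1.of_norm.mul_left _, det_apply']
    simp only [tsum_mul_left, (hgeom _).2]
    rfl

theorem summable_norm_schur_mul_schur_and_tsum {n : ℕ} {x y : Fin n → ℂ}
    (hx : Function.Injective x) (hy : Function.Injective y) (hy0 : ∀ j, y j ≠ 0)
    (hxy : ‖x‖ * ‖y‖ < 1) :
    Summable (fun μ : {μ : Fin n → ℕ // Antitone μ} => ‖schur x μ.1 * schur y μ.1‖) ∧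
      ∑' μ : {μ : Fin n → ℕ // Antitone μ}, schur x μ.1 * schur y μ.1 =
        ∏ i, ∏ j, (1 - x i * y j)⁻¹ := by
  obtain ⟨hfs, hft⟩ := summable_norm_alternant_mul_prod_pow_and_tsum x y hxy
  obtain ⟨hS, hT⟩ := summable_norm_sum_perm_and_tsum_eq hfs fun l hl => by
    rw [alternant_eq_zero_of_not_injective x hl, zero_mul]
  simp only [Function.comp_apply, sum_perm_alternant_mul_prod_pow] at hS hT
  set e := antitoneEquivStrictAnti n
  have hschur : ∀ μ : {μ : Fin n → ℕ // Antitone μ}, schur x μ.1 * schur y μ.1 =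
      alternant x (e μ).1 * alternant y (e μ).1 /
        (alternant x (fun i => n - 1 - i) * alternant y (fun i => n - 1 - i)) :=
    fun μ => div_mul_div_comm _ _ _ _
  have hne : ∀ i j, 1 - x i * y j ≠ 0 := fun i j =>
    sub_ne_zero.2 fun h => by simpa [← h] using (norm_apply_mul_apply_le x y i j).trans_lt hxy
  have hV := mul_ne_zero (alternant_rev_ne_zero hx) (alternant_rev_ne_zero hy)
  simp only [hschur]
  refine ⟨?_, ?_⟩
  · exact ((e.summable_iff.2 hS).div_const _).congr fun μ => (norm_div _ _).symm
  · rw [tsum_div_const, e.tsum_eq fun s => alternant x s.1 * alternant y s.1, ← hT, hft,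
      det_of_inv_one_sub_mul x y hy hy0 hne, ← alternant_rev_mul_alternant_rev,
      mul_div_cancel_left₀ _ hV]

lemma Fin.antitone_snoc_zero {k : ℕ} {m : Fin k → ℕ} (hm : Antitone m) :
    Antitone (Fin.snoc m 0 : Fin (k + 1) → ℕ) := by
  intro i j hij
  induction j using Fin.lastCases with
  | last => simp
  | cast j =>
    induction i using Fin.lastCases with
    | last => exact absurd hij (not_le.2 (Fin.castSucc_lt_last j))
    | cast i => simpa using hm (Fin.castSucc_le_castSucc_iff.1 hij)

def antitoneSnocEquiv (k : ℕ) :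
    {m : Fin k → ℕ // Antitone m} × ℕ ≃ {μ : Fin (k + 1) → ℕ // Antitone μ} where
  toFun p := ⟨fun i => (Fin.snoc p.1.1 0 : Fin (k + 1) → ℕ) i + p.2, fun _ _ hij =>
    Nat.add_le_add_right (Fin.antitone_snoc_zero p.1.2 hij) _⟩
  invFun μ := (⟨fun i => μ.1 i.castSucc - μ.1 (Fin.last k), fun _ _ hij =>
    Nat.sub_le_sub_right (μ.2 (Fin.castSucc_le_castSucc_iff.2 hij)) _⟩, μ.1 (Fin.last k))
  left_inv p := by ext <;> simp
  right_inv μ := by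
    ext i
    induction i using Fin.lastCases with
    | last => simp
    | cast i =>
      have := μ.2 (Fin.le_last i.castSucc)
      simp only [Fin.snoc_castSucc]
      omega

lemma summable_norm_schur_mul_schur_snoc_and_tsum {k : ℕ} (x y : Fin (k + 1) → ℂ)
    (hs : Summable fun μ : {μ : Fin (k + 1) → ℕ // Antitone μ} => ‖schur x μ.1 * schur y μ.1‖)
    (hq : ‖(∏ i, x i) * ∏ j, y j‖ < 1) :
    Summable (fun m : {m : Fin k → ℕ // Antitone m} =>
        ‖schur x (Fin.snoc m.1 0) * schur y (Fin.snoc m.1 0)‖) ∧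
      ∑' m : {m : Fin k → ℕ // Antitone m}, schur x (Fin.snoc m.1 0) * schur y (Fin.snoc m.1 0) =
        (1 - (∏ i, x i) * ∏ j, y j) *
          ∑' μ : {μ : Fin (k + 1) → ℕ // Antitone μ}, schur x μ.1 * schur y μ.1 := by
  set q := (∏ i, x i) * ∏ j, y j
  set G := fun m : {m : Fin k → ℕ // Antitone m} =>
    schur x (Fin.snoc m.1 0) * schur y (Fin.snoc m.1 0)
  have hterm : ∀ p, schur x (antitoneSnocEquiv k p).1 * schur y (antitoneSnocEquiv k p).1 =
      G p.1 * q ^ p.2 := fun p => by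
    simp only [antitoneSnocEquiv, Equiv.coe_fn_mk, schur_add_const, G, q, mul_pow]
    ring
  have hprod : Summable fun p : {m : Fin k → ℕ // Antitone m} × ℕ => ‖G p.1 * q ^ p.2‖ := by
    simpa only [Function.comp_def, hterm] using (antitoneSnocEquiv k).summable_iff.2 hs
  have hG : Summable fun m => ‖G m‖ :=
    (hprod.comp_injective (Prod.mk_left_injective 0)).congr fun m => by simp
  have hq1 : 1 - q ≠ 0 := sub_ne_zero.2 fun h => by simp [← h] at hq
  refine ⟨hG, ?_⟩
  rw [← (antitoneSnocEquiv k).tsum_eq, tsum_congr hterm,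
    ← tsum_mul_tsum_of_summable_norm hG (summable_norm_geometric_of_norm_lt_one hq),
    tsum_geometric_of_norm_lt_one hq, mul_left_comm, mul_inv_cancel₀ hq1, mul_one]

lemma Fin.snoc_zero_zero {α : Type*} [Zero α] (k : ℕ) :
    (Fin.snoc (0 : Fin k → α) 0 : Fin (k + 1) → α) = 0 := by
  ext i
  induction i using Fin.lastCases <;> simp

lemma summable_norm_mul_zero_pow_sum_and_tsum {k : ℕ} (f : {m : Fin k → ℕ // Antitone m} → ℂ) :
    Summable (fun m => ‖f m * 0 ^ ∑ i, m.1 i‖) ∧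
      ∑' m, f m * 0 ^ ∑ i, m.1 i = f ⟨0, antitone_const⟩ := by
  have hzero : ∀ m : {m : Fin k → ℕ // Antitone m}, m ≠ ⟨0, antitone_const⟩ →
      (0 : ℂ) ^ ∑ i, m.1 i = 0 := fun m hm => zero_pow fun h => hm <| Subtype.ext <| funext
    fun i => by simpa using (sum_eq_zero_iff.1 h) i (mem_univ i)
  refine ⟨summable_of_ne_finset_zero (s := {⟨0, antitone_const⟩}) fun m hm => ?_, ?_⟩
  · simp [hzero m (by simpa using hm)]
  · rw [tsum_eq_single _ fun m hm => by rw [hzero m hm, mul_zero]]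
    simp

/-- For `n = k + 1 ≥ 1`, pairwise distinct `x, y ∈ ℂ^n` with `(∏ x_i)(∏ y_j) = 1`, and
`t` with `(max |x_i|)(max |y_j|)|t| < 1`, the family
`λ_x(m₁,…,m_{n−1},0) λ_y(m₁,…,m_{n−1},0) t^{m₁+⋯+m_{n−1}}` over weakly decreasing
`m ∈ ℕ^{n−1}` is absolutely summable with sum `(1 − tⁿ) ∏_{i,j}(1 − x_i y_j t)⁻¹`. -/
theorem cauchy_identity_trivial_central_character (k : ℕ) (x y : Fin (k + 1) → ℂ)
    (hx : Function.Injective x) (hy : Function.Injective y)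
    (hprod : (∏ i, x i) * (∏ j, y j) = 1) (t : ℂ)
    (ht : (Finset.univ.sup' ⟨0, Finset.mem_univ _⟩ fun i => ‖x i‖) *
          (Finset.univ.sup' ⟨0, Finset.mem_univ _⟩ fun j => ‖y j‖) *
          ‖t‖ < 1) :
    Summable (fun m : {m : Fin k → ℕ // Antitone m} =>
      ‖schur x (Fin.snoc m.1 0) * schur y (Fin.snoc m.1 0) *
        t ^ (∑ i, m.1 i)‖) ∧
    ∑' m : {m : Fin k → ℕ // Antitone m},
        schur x (Fin.snoc m.1 0) * schur y (Fin.snoc m.1 0) * t ^ (∑ i, m.1 i)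
      = (1 - t ^ (k + 1)) * ∏ i : Fin (k + 1), ∏ j : Fin (k + 1), (1 - x i * y j * t)⁻¹ := by
  rcases eq_or_ne t 0 with rfl | ht0
  · obtain ⟨hs, hsum⟩ := summable_norm_mul_zero_pow_sum_and_tsum fun m =>
      schur x (Fin.snoc m.1 0) * schur y (Fin.snoc m.1 0)
    exact ⟨hs, hsum.trans (by simp [Fin.snoc_zero_zero, schur_zero hx, schur_zero hy])⟩
  have hy0 : ∀ j, y j ≠ 0 := fun j =>
    prod_ne_zero_iff.1 (right_ne_zero_of_mul_eq_one hprod) j (mem_univ j)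
  have hxty : ‖x‖ * ‖t • y‖ < 1 :=
    calc ‖x‖ * ‖t • y‖ = ‖x‖ * ‖y‖ * ‖t‖ := by rw [norm_smul]; ring
      _ ≤ _ := mul_le_mul_of_nonneg_right (norm_mul_norm_le_sup'_mul_sup' _ x y) (norm_nonneg t)
      _ < 1 := ht
  have hq : (∏ i, x i) * ∏ j, (t • y) j = t ^ (k + 1) := by
    simp only [Pi.smul_apply, smul_eq_mul, prod_mul_distrib, prod_const, card_univ,
      Fintype.card_fin]
    linear_combination t ^ (k + 1) * hprod
  obtain ⟨hs, hsum⟩ := summable_norm_schur_mul_schur_and_tsum (y := t • y) hx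
    (fun i j h => hy (mul_left_cancel₀ ht0 h)) (fun j => mul_ne_zero ht0 (hy0 j)) hxty
  obtain ⟨hG, hGsum⟩ := summable_norm_schur_mul_schur_snoc_and_tsum x (t • y) hs
    (norm_prod_mul_prod_lt_one k.succ_ne_zero hxty)
  have hterm : ∀ m : {m : Fin k → ℕ // Antitone m},
      schur x (Fin.snoc m.1 0) * schur (t • y) (Fin.snoc m.1 0) =
        schur x (Fin.snoc m.1 0) * schur y (Fin.snoc m.1 0) * t ^ ∑ i, m.1 i := fun m => by
    rw [schur_smul ht0, Fin.sum_snoc, add_zero]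
    ring
  have hentry : ∀ i j, x i * (t • y) j = x i * y j * t := fun i j => by
    rw [Pi.smul_apply, smul_eq_mul]
    ring
  simp only [hterm, hq, hsum, hentry] at hG hGsum
  exact ⟨hG, hGsum⟩
end

section
/- Let N ≥ 2 be an integer and let x₁, …, x_N be nonzero, pairwise distinct complex numbers with ∏_{i=1}^N x_i = 1. Let m ∈ ℤ^{N−1} with m₁ ≥ m₂ ≥ … ≥ m_{N−1} ≥ 0. Then λ_x(m₁, …, m_{N−1}, 0) = Σ_{j=1}^{N} λ_{x^{(j)}}(m) · x_j^{−1} / ∏_{i ≠ j}(x_i − x_j), where x^{(j)} ∈ ℂ^{N−1} denotes the tuple x with the entry x_j omitted. -/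
open Finset Matrix

section

variable {n : ℕ}

theorem Fin.prod_univ_erase {M : Type*} [CommMonoid M] (f : Fin (n + 1) → M) (p : Fin (n + 1)) :
    ∏ i ∈ univ.erase p, f i = ∏ i, f (p.succAbove i) := by
  rw [Fin.univ_succAbove n p, erase_cons, prod_map, Fin.coe_succAboveEmb]

theorem Fin.prod_succAbove_eq_inv {M : Type*} [DivisionCommMonoid M]
    {x : Fin (n + 1) → M} (hx : ∏ i, x i = 1) (p : Fin (n + 1)) :
    ∏ i, x (p.succAbove i) = (x p)⁻¹ := by
  rw [Fin.prod_univ_succAbove _ p] at hx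
  exact eq_inv_of_mul_eq_one_right hx

variable {R : Type*} [CommRing R]

theorem det_of_pow_rev (y : Fin n → R) :
    (of fun i j : Fin n => y j ^ (n - 1 - (i : ℕ))).det
      = ∏ i, ∏ j ∈ Ioi i, (y i - y j) := by
  have hvdm : (of fun i j : Fin n => y j ^ (n - 1 - (i : ℕ))) = (projVandermonde 1 y)ᵀ := by
    ext i j
    simp only [of_apply, transpose_apply, projVandermonde_apply, Pi.one_apply, one_pow,
      one_mul, Fin.val_rev]
    congr 1
    omega
  simp [hvdm, det_projVandermonde]

theorem det_of_pow_rev_ne_zero [IsDomain R] {y : Fin n → R} (hy : Function.Injective y) :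
    (of fun i j : Fin n => y j ^ (n - 1 - (i : ℕ))).det ≠ 0 := by
  rw [det_of_pow_rev]
  exact prod_ne_zero_iff.mpr fun i _ => prod_ne_zero_iff.mpr fun j hj =>
    sub_ne_zero.mpr (hy.ne (mem_Ioi.mp hj).ne)

theorem det_of_pow_rev_cons (a : R) (y : Fin n → R) :
    (of fun i j : Fin (n + 1) =>
        (Fin.cons a y : Fin (n + 1) → R) j ^ (n + 1 - 1 - (i : ℕ))).det
      = (∏ i, (a - y i)) * (of fun i j : Fin n => y j ^ (n - 1 - (i : ℕ))).det := by
  rw [det_of_pow_rev, det_of_pow_rev, Fin.prod_univ_succ, Fin.Ioi_zero_eq_map]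
  simp

theorem det_of_pow_rev_eq_mul_succAbove (x : Fin (n + 1) → R) (p : Fin (n + 1)) :
    (of fun i j : Fin (n + 1) => x j ^ (n + 1 - 1 - (i : ℕ))).det
      = (-1) ^ (n + (p : ℕ)) * (∏ i ∈ univ.erase p, (x i - x p))
        * (of fun i j : Fin n => x (p.succAbove j) ^ (n - 1 - (i : ℕ))).det := by
  -- Moving column `p` to the front is the permutation `p.cycleRange⁻¹`, of sign `(-1) ^ p`.
  have hcons : (of fun i j : Fin (n + 1) => x j ^ (n + 1 - 1 - (i : ℕ))).submatrix id
      p.cycleRange.symm = of fun i j : Fin (n + 1) =>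
        (Fin.cons (x p) fun l => x (p.succAbove l) : Fin (n + 1) → R) j ^
          (n + 1 - 1 - (i : ℕ)) := by
    ext i j
    cases j using Fin.cases <;> simp
  have hsign :
      ∏ i, (x p - x (p.succAbove i)) = (-1) ^ n * ∏ i ∈ univ.erase p, (x i - x p) := by
    simpa [Fin.prod_univ_erase] using prod_neg (s := univ) fun i => x (p.succAbove i) - x p
  have hperm := det_permute' p.cycleRange.symm
    (of fun i j : Fin (n + 1) => x j ^ (n + 1 - 1 - (i : ℕ)))
  rw [hcons, det_of_pow_rev_cons, hsign, Equiv.Perm.sign_symm, Fin.sign_cycleRange,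
    Units.val_pow_eq_pow_val, Units.val_neg, Units.val_one, Int.cast_pow, Int.cast_neg,
    Int.cast_one] at hperm
  have hsq : ((-1 : R) ^ (p : ℕ)) * (-1) ^ (p : ℕ) = 1 := by
    rw [← mul_pow]; simp
  linear_combination (-(-1) ^ (p : ℕ)) * hperm
    - (of fun i j : Fin (n + 1) => x j ^ (n + 1 - 1 - (i : ℕ))).det * hsq

theorem det_of_pow_snoc_zero (x : Fin (n + 1) → R) (m : Fin n → ℕ) :
    (of fun i j : Fin (n + 1) =>
        x j ^ ((Fin.snoc m 0 : Fin (n + 1) → ℕ) i + (n + 1 - 1 - (i : ℕ)))).det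
      = ∑ p : Fin (n + 1), (-1) ^ (n + (p : ℕ)) * ((∏ j, x (p.succAbove j))
          * (of fun i j : Fin n => x (p.succAbove j) ^ (m i + (n - 1 - (i : ℕ)))).det) := by
  rw [det_succ_row _ (Fin.last n)]
  refine sum_congr rfl fun p _ => ?_
  have hminor : (of fun i j : Fin (n + 1) =>
        x j ^ ((Fin.snoc m 0 : Fin (n + 1) → ℕ) i + (n + 1 - 1 - (i : ℕ)))).submatrix
          (Fin.last n).succAbove p.succAbove
      = of fun i j : Fin n => x (p.succAbove j) *
          of (fun i j : Fin n => x (p.succAbove j) ^ (m i + (n - 1 - (i : ℕ)))) i j := by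
    ext i j
    simp only [submatrix_apply, of_apply, Fin.succAbove_last, Fin.snoc_castSucc,
      Fin.val_castSucc, ← pow_succ']
    congr 1
    omega
  rw [hminor, det_mul_row]
  simp

end

theorem schur_cofactor_expansion_general (k : ℕ) (x : Fin (k + 1) → ℂ)
    (hx : Function.Injective x) (hprod : ∏ i, x i = 1)
    (m : Fin k → ℕ) :
    schur x (Fin.snoc m 0)
      = ∑ j : Fin (k + 1),
          schur (fun i => x (j.succAbove i)) m * (x j)⁻¹ /
            ∏ i ∈ Finset.univ.erase j, (x i - x j) := by
  unfold schur
  rw [det_of_pow_snoc_zero, sum_div]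
  refine sum_congr rfl fun p _ => ?_
  have hE : ∏ i ∈ univ.erase p, (x i - x p) ≠ 0 :=
    prod_ne_zero_iff.mpr fun i hi => sub_ne_zero.mpr (hx.ne (ne_of_mem_erase hi))
  have hV := det_of_pow_rev_ne_zero (hx.comp p.succAbove_right_injective)
  rw [det_of_pow_rev_eq_mul_succAbove x p, Fin.prod_succAbove_eq_inv hprod]
  field_simp

/-- Cofactor expansion: for `N = k + 1 ≥ 2`, nonzero pairwise distinct `x₁,…,x_N` with
`∏ x_i = 1`, and weakly decreasing `m ∈ ℕ^{N−1}`,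
`λ_x(m,0) = Σ_j λ_{x^{(j)}}(m) x_j⁻¹ / ∏_{i≠j}(x_i − x_j)`, where `x^{(j)}` is the tuple
`x` with the entry `x_j` omitted. -/
theorem schur_cofactor_expansion (k : ℕ) (hk : 1 ≤ k) (x : Fin (k + 1) → ℂ)
    (hx0 : ∀ i, x i ≠ 0) (hx : Function.Injective x) (hprod : ∏ i, x i = 1)
    (m : Fin k → ℕ) (hm : Antitone m) :
    schur x (Fin.snoc m 0)
      = ∑ j : Fin (k + 1),
          schur (fun i => x (j.succAbove i)) m * (x j)⁻¹ /
            ∏ i ∈ Finset.univ.erase j, (x i - x j) :=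
  schur_cofactor_expansion_general k x hx hprod m
end
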